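/- The symplectic Weyl curvature tensor is totally trace-free: with W^{ijkl} := Σ_{a,b,c,d} ω^{ia}ω^{jb}ω^{kc}ω^{ld} W_{abcd}, all six contractions vanish, i.e. Σ_{i,j} W^{ijkl}ω_{ij} = 0, Σ_{i,k} W^{ijkl}ω_{ik} = 0, Σ_{i,l} W^{ijkl}ω_{il} = 0, Σ_{j,k} W^{ijkl}ω_{jk} = 0, Σ_{j,l} W^{ijkl}ω_{jl} = 0 and Σ_{k,l} W^{ijkl}ω_{kl} = 0 (the free indices being arbitrary). -/

import Mathlib

noncomputable section

open Finset MvPolynomial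

/-- The space of symplectic spinors: complex polynomials in `l` variables. -/
abbrev Pol (l : ℕ) := MvPolynomial (Fin l) ℂ

/-- Components `ω_{ij}` of the standard symplectic form on `ℝ^{2l}`. -/
def om (l : ℕ) (i j : Fin (2*l)) : ℝ :=
  if (j : ℕ) = (i : ℕ) + l then 1 else if (i : ℕ) = (j : ℕ) + l then -1 else 0

/-- Components `ω^{ij}`, defined by `Σ_k ω_{ik} ω^{jk} = δ_i^j`. -/
def omUp (l : ℕ) (i j : Fin (2*l)) : ℝ :=
  if (j : ℕ) = (i : ℕ) + l then 1 else if (i : ℕ) = (j : ℕ) + l then -1 else 0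

/-- Symplectic Clifford multiplication by a basis vector `e_i`. -/
def cliff (l : ℕ) (i : Fin (2*l)) (f : Pol l) : Pol l :=
  if h : (i : ℕ) < l then Complex.I • (MvPolynomial.X (⟨(i : ℕ), h⟩ : Fin l) * f)
  else MvPolynomial.pderiv (⟨(i : ℕ) - l, by have := i.isLt; omega⟩ : Fin l) f

/-- Symplectic Clifford multiplication by an arbitrary vector, extended ℝ-bilinearly. -/
def cliffV (l : ℕ) (v : Fin (2*l) → ℝ) (f : Pol l) : Pol l :=
  ∑ i, ((v i : ℝ) : ℂ) • cliff l i f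

/-- Symplectic-spinor-valued `r`-forms (as functions of their `r` vector arguments). -/
abbrev Form (l r : ℕ) := (Fin r → (Fin (2*l) → ℝ)) → Pol l

/-- The standard basis vector `e_i` of `ℝ^{2l}`. -/
def basisVec (l : ℕ) (i : Fin (2*l)) : Fin (2*l) → ℝ := Pi.single i 1

/-- The operator `X`: `(Xφ)(v_1,…,v_{r+1}) = −Σ_a (−1)^{a+1} v_a · φ(v_1,…,v̂_a,…,v_{r+1})`. -/
def Xop (l r : ℕ) (φ : Form l r) : Form l (r+1) :=
  fun v => -∑ a : Fin (r+1), ((-1 : ℂ)^(a : ℕ)) • cliffV l (v a) (φ (fun b => v (a.succAbove b)))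

/-- The operator `Y`: `(Yφ)(v_1,…,v_r) = Σ_{i,j} ω^{ij} e_j · φ(e_i, v_1,…,v_r)`. -/
def Yop (l r : ℕ) (φ : Form l (r+1)) : Form l r :=
  fun v => ∑ i, ∑ j, ((omUp l i j : ℝ) : ℂ) • cliff l j (φ (Fin.cons (basisVec l i) v))

/-- The operator `H = XY + YX` (on 0-forms `Y` vanishes, so there `H = YX`). -/
def Hop (l : ℕ) : {r : ℕ} → Form l r → Form l r
  | 0, φ => Yop l 0 (Xop l 0 φ)
  | (r+1), φ => Xop l r (Yop l r φ) + Yop l (r+1) (Xop l (r+1) φ)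

/-- `X²Y²` on spinor-valued 2-forms. -/
def XXYY (l : ℕ) (φ : Form l 2) : Form l 2 := Xop l 1 (Xop l 0 (Yop l 0 (Yop l 1 φ)))

/-- `XY` on spinor-valued 2-forms. -/
def XY2 (l : ℕ) (φ : Form l 2) : Form l 2 := Xop l 1 (Yop l 1 φ)

/-- The projection `q^{20} = (1/l) X²Y²`. -/
def q20 (l : ℕ) (φ : Form l 2) : Form l 2 := ((l : ℂ))⁻¹ • XXYY l φ

/-- The projection `q^{21} = (𝕚/(1−l)) (XY − (𝕚/l) X²Y²)`. -/
def q21 (l : ℕ) (φ : Form l 2) : Form l 2 :=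
  (Complex.I / (1 - (l : ℂ))) • (XY2 l φ - (Complex.I / (l : ℂ)) • XXYY l φ)

/-- The projection `q^{22} = Id − q^{20} − q^{21}`. -/
def q22 (l : ℕ) (φ : Form l 2) : Form l 2 := φ - q20 l φ - q21 l φ

/-- The spinor-valued 2-form `c · ε^k ∧ ε^m ⊗ s`. -/
def w2 (l : ℕ) (c : ℝ) (k m : Fin (2*l)) (s : Pol l) : Form l 2 :=
  fun v => ((c * (v 0 k * v 1 m - v 0 m * v 1 k) : ℝ) : ℂ) • s

/-- The symplectic Ricci tensor `σ_{ij} = Σ_{k,m} ω^{km} R_{mjki}`. -/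
def ric (l : ℕ) (R : Fin (2*l) → Fin (2*l) → Fin (2*l) → Fin (2*l) → ℝ)
    (i j : Fin (2*l)) : ℝ :=
  ∑ k, ∑ m, omUp l k m * R m j k i

/-- `σ̃_{ijkl}` built from a symmetric tensor `σ`. -/
def st (l : ℕ) (σ : Fin (2*l) → Fin (2*l) → ℝ) (i j k m : Fin (2*l)) : ℝ :=
  (1/(2*((l : ℝ)+1))) * (om l i m * σ j k - om l i k * σ j m
    + om l j m * σ i k - om l j k * σ i m + 2 * σ i j * om l k m)

/-- The symplectic Weyl tensor `W = R − σ̃`. -/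
def weyl (l : ℕ) (R : Fin (2*l) → Fin (2*l) → Fin (2*l) → Fin (2*l) → ℝ)
    (i j k m : Fin (2*l)) : ℝ :=
  R i j k m - st l (ric l R) i j k m

/-- Raising all four indices: `T^{ijkm} = Σ ω^{ia}ω^{jb}ω^{kc}ω^{md} T_{abcd}`. -/
def upT (l : ℕ) (T : Fin (2*l) → Fin (2*l) → Fin (2*l) → Fin (2*l) → ℝ)
    (i j k m : Fin (2*l)) : ℝ :=
  ∑ a, ∑ b, ∑ c, ∑ d, omUp l i a * omUp l j b * omUp l k c * omUp l m d * T a b c d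

/-- Raising both indices of a 2-tensor: `σ^{ij} = Σ ω^{ia}ω^{jb} σ_{ab}`. -/
def up2 (l : ℕ) (σ : Fin (2*l) → Fin (2*l) → ℝ) (i j : Fin (2*l)) : ℝ :=
  ∑ a, ∑ b, omUp l i a * omUp l j b * σ a b

/-- The spinor-valued 2-form `(𝕚/2) Σ T^{ij}_{kl} ε^k ∧ ε^l ⊗ e_{ij}·φ` built from a
4-tensor `T` (used for `R^S φ`, `σ^S φ` and `W^S φ`). -/
def curvS (l : ℕ) (T : Fin (2*l) → Fin (2*l) → Fin (2*l) → Fin (2*l) → ℝ)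
    (φ : Pol l) : Form l 2 :=
  (Complex.I/2) • ∑ i, ∑ j, ∑ k, ∑ m,
    w2 l (∑ a, ∑ b, omUp l i a * omUp l j b * T a b k m) k m (cliff l i (cliff l j φ))

/-- The spinor-valued 2-form `Σ_{i,j,k,d,m} T^{ijk}_d ε^m ∧ ε^d ⊗ e_{mkij}·φ`. -/
def mixS (l : ℕ) (T : Fin (2*l) → Fin (2*l) → Fin (2*l) → Fin (2*l) → ℝ)
    (φ : Pol l) : Form l 2 :=
  ∑ i, ∑ j, ∑ k, ∑ d, ∑ m,
    w2 l (∑ a, ∑ b, ∑ c, omUp l i a * omUp l j b * omUp l k c * T a b c d) m d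
      (cliff l m (cliff l k (cliff l i (cliff l j φ))))

/-!
σ̃ has the algebraic symmetries of a Fedosov curvature tensor, and for symmetric σ its
symplectic Ricci tensor is σ itself (this is what the factor `1/(2(l+1))` is for). Hence
`W = R - σ̃` is again curvature-like, now with vanishing Ricci tensor. Raising all indices
preserves both properties, since the Ricci tensor of the raised tensor is the raised Ricci
tensor. Finally, the symmetries and the Bianchi identity express each of the six
ω-contractions of a curvature-like tensor as `0`, plus or minus its Ricci tensor, or twice it.
-/

/-- `i ↦ i ± l`: the only index `j` with `om l i j ≠ 0`. -/
def omPartner (l : ℕ) (i : Fin (2*l)) : Fin (2*l) :=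
  if h : (i : ℕ) < l then ⟨i + l, by omega⟩ else ⟨i - l, by omega⟩

def omSign (l : ℕ) (i : Fin (2*l)) : ℝ := if (i : ℕ) < l then 1 else -1

section Omega

variable {l : ℕ}

lemma omPartner_val (i : Fin (2*l)) :
    (omPartner l i : ℕ) = if (i : ℕ) < l then (i : ℕ) + l else (i : ℕ) - l := by
  unfold omPartner; split_ifs <;> rfl

@[simp]
lemma omPartner_omPartner (i : Fin (2*l)) : omPartner l (omPartner l i) = i := by
  ext; simp only [omPartner_val]; split_ifs <;> omega

@[simp]
lemma omSign_omPartner (i : Fin (2*l)) : omSign l (omPartner l i) = -omSign l i := by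
  have := i.isLt
  unfold omSign; rw [omPartner_val]; split_ifs <;> first | omega | norm_num

@[simp]
lemma omSign_mul_self (i : Fin (2*l)) : omSign l i * omSign l i = 1 := by
  unfold omSign; split_ifs <;> norm_num

lemma om_eq_ite (i j : Fin (2*l)) : om l i j = if j = omPartner l i then omSign l i else 0 := by
  have := i.isLt
  unfold om omSign
  simp only [Fin.ext_iff, omPartner_val]
  split_ifs <;> first | rfl | omega

lemma omUp_eq_om : omUp l = om l := rfl

lemma om_antisymm (i j : Fin (2*l)) : om l i j = -om l j i := by
  unfold om; split_ifs <;> first | omega | norm_num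

lemma sum_om_mul (i : Fin (2*l)) (f : Fin (2*l) → ℝ) :
    ∑ j, om l i j * f j = omSign l i * f (omPartner l i) := by
  simp [om_eq_ite]

lemma sum_comp_omPartner (f : Fin (2*l) → ℝ) : ∑ i, f (omPartner l i) = ∑ i, f i :=
  Equiv.sum_comp (Function.Involutive.toPerm _ omPartner_omPartner) f

lemma sum_om_omPartner_mul (i : Fin (2*l)) (f : Fin (2*l) → ℝ) :
    ∑ k, om l (omPartner l k) i * f k = -(omSign l i * f i) := by
  simp [om_eq_ite, eq_comm (a := i)]

lemma sum_om_mul_left (i : Fin (2*l)) (f : Fin (2*l) → ℝ) :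
    ∑ k, om l k i * f k = -(omSign l i * f (omPartner l i)) := by
  simp only [om_antisymm _ i, neg_mul, Finset.sum_neg_distrib, sum_om_mul]

lemma om_omPartner_self (k : Fin (2*l)) : om l (omPartner l k) k = -omSign l k := by
  simp [om_eq_ite]

lemma sum_omSign_mul_self : ∑ k : Fin (2*l), omSign l k * omSign l k = 2 * l := by
  simp

lemma ric_eq_sum (T : Fin (2*l) → Fin (2*l) → Fin (2*l) → Fin (2*l) → ℝ) (i j : Fin (2*l)) :
    ric l T i j = ∑ k, omSign l k * T (omPartner l k) j k i :=
  Finset.sum_congr rfl fun k _ => sum_om_mul k _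

lemma sum_omSign_mul_eq_zero_of_symm {σ : Fin (2*l) → Fin (2*l) → ℝ}
    (hσ : ∀ i j, σ i j = σ j i) : ∑ k, omSign l k * σ (omPartner l k) k = 0 := by
  have h := sum_comp_omPartner (fun k => omSign l k * σ (omPartner l k) k)
  simp only [omPartner_omPartner, omSign_omPartner, hσ _ (omPartner l _), neg_mul,
    Finset.sum_neg_distrib] at h
  linarith

end Omega

/-- The algebraic symmetries (i)–(iii) of the curvature tensor of a Fedosov connection. -/
structure IsCurvatureTensor {ι : Type*} (T : ι → ι → ι → ι → ℝ) : Prop where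
  antisymm_right : ∀ i j k m, T i j k m = -T i j m k
  bianchi : ∀ i j k m, T i j k m + T i k m j + T i m j k = 0
  symm_left : ∀ i j k m, T i j k m = T j i k m

namespace IsCurvatureTensor

variable {ι : Type*} {T S : ι → ι → ι → ι → ℝ}

lemma sub (hT : IsCurvatureTensor T) (hS : IsCurvatureTensor S) : IsCurvatureTensor (T - S) where
  antisymm_right i j k m := by
    simp only [Pi.sub_apply]; rw [hT.antisymm_right, hS.antisymm_right]; ring
  bianchi i j k m := by
    simp only [Pi.sub_apply]; linear_combination hT.bianchi i j k m - hS.bianchi i j k m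
  symm_left i j k m := by
    simp only [Pi.sub_apply]; rw [hT.symm_left, hS.symm_left]

end IsCurvatureTensor

section Traces

variable {l : ℕ} {T : Fin (2*l) → Fin (2*l) → Fin (2*l) → Fin (2*l) → ℝ}

lemma trace13_eq_neg_ric (b d : Fin (2*l)) :
    ∑ a, ∑ c, T a b c d * om l a c = -ric l T d b := by
  unfold ric
  rw [Finset.sum_comm, ← Finset.sum_neg_distrib]
  refine Finset.sum_congr rfl fun c _ => ?_
  rw [← Finset.sum_neg_distrib]
  refine Finset.sum_congr rfl fun a _ => ?_
  rw [omUp_eq_om, om_antisymm]; ring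

namespace IsCurvatureTensor

variable (hT : IsCurvatureTensor T)
include hT

lemma trace12_eq_zero (c d : Fin (2*l)) : ∑ a, ∑ b, T a b c d * om l a b = 0 := by
  have h : ∑ a, ∑ b, T a b c d * om l a b = -∑ a, ∑ b, T a b c d * om l a b := by
    conv_lhs => rw [Finset.sum_comm]
    simp only [← Finset.sum_neg_distrib]
    refine Finset.sum_congr rfl fun a _ => Finset.sum_congr rfl fun b _ => ?_
    rw [hT.symm_left, om_antisymm]; ring
  linarith

lemma trace14_eq_ric (b c : Fin (2*l)) : ∑ a, ∑ d, T a b c d * om l a d = ric l T c b := by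
  simp only [hT.antisymm_right _ _ c, neg_mul, Finset.sum_neg_distrib, trace13_eq_neg_ric, neg_neg]

lemma trace23_eq_neg_ric (a d : Fin (2*l)) :
    ∑ b, ∑ c, T a b c d * om l b c = -ric l T d a := by
  simp only [hT.symm_left a, trace13_eq_neg_ric]

lemma trace24_eq_ric (a c : Fin (2*l)) : ∑ b, ∑ d, T a b c d * om l b d = ric l T c a := by
  simp only [hT.symm_left a, hT.trace14_eq_ric]

lemma trace34_eq_two_mul_ric (a b : Fin (2*l)) :
    ∑ c, ∑ d, T a b c d * om l c d = 2 * ric l T b a := by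
  have h : ∀ c d, T a b c d * om l c d =
      -(T a c d b * om l c d) - T a d c b * om l d c := by
    intro c d
    rw [om_antisymm d c, hT.antisymm_right a d c b]
    linear_combination om l c d * hT.bianchi a b c d
  simp only [h, Finset.sum_sub_distrib, Finset.sum_neg_distrib]
  rw [Finset.sum_comm (f := fun c d => T a d c b * om l d c), trace23_eq_neg_ric hT]
  ring

lemma ric_symm (a b : Fin (2*l)) : ric l T a b = ric l T b a := by
  have h := hT.trace34_eq_two_mul_ric a b
  simp only [hT.symm_left a b, hT.trace34_eq_two_mul_ric b a] at h
  linarith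

end IsCurvatureTensor

end Traces

section SymmetricPart

variable {l : ℕ} {σ : Fin (2*l) → Fin (2*l) → ℝ} (hσ : ∀ i j, σ i j = σ j i)
include hσ

lemma isCurvatureTensor_st : IsCurvatureTensor (st l σ) where
  antisymm_right i j k m := by
    unfold st; rw [om_antisymm m k]; ring
  bianchi i j k m := by
    unfold st
    rw [om_antisymm k j, om_antisymm m j, om_antisymm m k, hσ k j, hσ m j, hσ m k]
    ring
  symm_left i j k m := by
    unfold st; rw [hσ i j]; ring

lemma ric_st : ric l (st l σ) = σ := by
  ext i j
  have hsplit : ∀ k, omSign l k * st l σ (omPartner l k) j k i =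
      1 / (2 * ((l : ℝ) + 1)) * (om l (omPartner l k) i * (omSign l k * σ j k)
        + omSign l k * omSign l k * σ j i
        + om l j i * (omSign l k * σ (omPartner l k) k)
        - om l j k * (omSign l k * σ (omPartner l k) i)
        + 2 * (om l k i * (omSign l k * σ (omPartner l k) j))) := by
    intro k; rw [st, om_omPartner_self]; ring
  rw [ric_eq_sum]
  simp only [hsplit, ← Finset.mul_sum, Finset.sum_add_distrib, Finset.sum_sub_distrib,
    ← Finset.sum_mul]
  rw [sum_om_omPartner_mul, sum_omSign_mul_self, sum_omSign_mul_eq_zero_of_symm hσ,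
    sum_om_mul, sum_om_mul_left]
  simp only [omSign_omPartner, omPartner_omPartner, hσ j i, neg_mul, mul_neg, ← mul_assoc,
    omSign_mul_self]
  field_simp
  ring

end SymmetricPart

section Weyl

variable {l : ℕ} {T S : Fin (2*l) → Fin (2*l) → Fin (2*l) → Fin (2*l) → ℝ}

lemma ric_sub : ric l (T - S) = ric l T - ric l S := by
  ext i j
  simp only [ric, Pi.sub_apply, mul_sub, Finset.sum_sub_distrib]

lemma weyl_eq_sub (R : Fin (2*l) → Fin (2*l) → Fin (2*l) → Fin (2*l) → ℝ) :
    weyl l R = R - st l (ric l R) := rfl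

lemma isCurvatureTensor_weyl (hT : IsCurvatureTensor T) : IsCurvatureTensor (weyl l T) :=
  hT.sub (isCurvatureTensor_st hT.ric_symm)

lemma ric_weyl_eq_zero (hT : IsCurvatureTensor T) : ric l (weyl l T) = 0 := by
  rw [weyl_eq_sub, ric_sub, ric_st hT.ric_symm, sub_self]

end Weyl

section Raising

variable {l : ℕ} {T : Fin (2*l) → Fin (2*l) → Fin (2*l) → Fin (2*l) → ℝ}

lemma upT_apply (i j k m : Fin (2*l)) :
    upT l T i j k m = omSign l i * omSign l j * omSign l k * omSign l m *
      T (omPartner l i) (omPartner l j) (omPartner l k) (omPartner l m) := by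
  simp only [upT, omUp_eq_om, mul_assoc, ← Finset.mul_sum, sum_om_mul]

lemma up2_apply (σ : Fin (2*l) → Fin (2*l) → ℝ) (i j : Fin (2*l)) :
    up2 l σ i j = omSign l i * omSign l j * σ (omPartner l i) (omPartner l j) := by
  simp only [up2, omUp_eq_om, mul_assoc, ← Finset.mul_sum, sum_om_mul]

lemma ric_upT : ric l (upT l T) = up2 l (ric l T) := by
  ext i j
  rw [ric_eq_sum, up2_apply, ric_eq_sum, Finset.mul_sum]
  conv_rhs => rw [← sum_comp_omPartner]
  refine Finset.sum_congr rfl fun k _ => ?_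
  simp only [upT_apply, omPartner_omPartner, omSign_omPartner]
  linear_combination
    -(omSign l k * omSign l i * omSign l j * T k (omPartner l j) (omPartner l k) (omPartner l i)) *
      omSign_mul_self k

lemma isCurvatureTensor_upT (hT : IsCurvatureTensor T) : IsCurvatureTensor (upT l T) where
  antisymm_right i j k m := by
    simp only [upT_apply]; rw [hT.antisymm_right]; ring
  bianchi i j k m := by
    simp only [upT_apply]
    linear_combination omSign l i * omSign l j * omSign l k * omSign l m *
      hT.bianchi (omPartner l i) (omPartner l j) (omPartner l k) (omPartner l m)
  symm_left i j k m := by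
    simp only [upT_apply]; rw [hT.symm_left]; ring

end Raising

theorem stmt_5_general (l : ℕ) (R : Fin (2*l) → Fin (2*l) → Fin (2*l) → Fin (2*l) → ℝ)
    (h1 : ∀ i j k m, R i j k m = - R i j m k)
    (h2 : ∀ i j k m, R i j k m + R i k m j + R i m j k = 0)
    (h3 : ∀ i j k m, R i j k m = R j i k m) :
    (∀ k m, ∑ i, ∑ j, upT l (weyl l R) i j k m * om l i j = 0) ∧
    (∀ j m, ∑ i, ∑ k, upT l (weyl l R) i j k m * om l i k = 0) ∧
    (∀ j k, ∑ i, ∑ m, upT l (weyl l R) i j k m * om l i m = 0) ∧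
    (∀ i m, ∑ j, ∑ k, upT l (weyl l R) i j k m * om l j k = 0) ∧
    (∀ i k, ∑ j, ∑ m, upT l (weyl l R) i j k m * om l j m = 0) ∧
    (∀ i j, ∑ k, ∑ m, upT l (weyl l R) i j k m * om l k m = 0) := by
  have hR : IsCurvatureTensor R := ⟨h1, h2, h3⟩
  have hW : IsCurvatureTensor (upT l (weyl l R)) :=
    isCurvatureTensor_upT (isCurvatureTensor_weyl hR)
  have hric : ric l (upT l (weyl l R)) = 0 := by
    rw [ric_upT, ric_weyl_eq_zero hR]
    ext i j
    simp [up2]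
  simp only [trace13_eq_neg_ric, hW.trace12_eq_zero, hW.trace14_eq_ric, hW.trace23_eq_neg_ric,
    hW.trace24_eq_ric, hW.trace34_eq_two_mul_ric, hric, Pi.zero_apply, neg_zero, mul_zero,
    implies_true, and_self]

/-- the symplectic Weyl tensor is totally trace-free. -/
theorem stmt_5 (l : ℕ) (hl : 2 ≤ l) (R : Fin (2*l) → Fin (2*l) → Fin (2*l) → Fin (2*l) → ℝ)
    (h1 : ∀ i j k m, R i j k m = - R i j m k)
    (h2 : ∀ i j k m, R i j k m + R i k m j + R i m j k = 0)
    (h3 : ∀ i j k m, R i j k m = R j i k m) :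
    (∀ k m, ∑ i, ∑ j, upT l (weyl l R) i j k m * om l i j = 0) ∧
    (∀ j m, ∑ i, ∑ k, upT l (weyl l R) i j k m * om l i k = 0) ∧
    (∀ j k, ∑ i, ∑ m, upT l (weyl l R) i j k m * om l i m = 0) ∧
    (∀ i m, ∑ j, ∑ k, upT l (weyl l R) i j k m * om l j k = 0) ∧
    (∀ i k, ∑ j, ∑ m, upT l (weyl l R) i j k m * om l j m = 0) ∧
    (∀ i j, ∑ k, ∑ m, upT l (weyl l R) i j k m * om l k m = 0) :=
  stmt_5_general l R h1 h2 h3
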